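/- Let I=[a,b]⊂ℝ be a closed nondegenerate interval and let φ∈Φ_c(I) satisfy (VA1) and (aDec)_q for some q<∞. Then for every f:I→ℝ, the upper and lower Riesz φ-variations coincide: V̄^φ_I(f) = V̲^φ_I(f). -/

import Mathlib

open MeasureTheory Filter Set
open scoped ENNReal

noncomputable section

/-- A partition of the interval `[a, b]` into finitely many nondegenerate closed
subintervals with pairwise disjoint interiors, encoded by its endpoints
`a = x 0 < x 1 < ⋯ < x n = b`. -/
structure IntervalPartition (a b : ℝ) where
  n : ℕ
  npos : 0 < n
  x : ℕ → ℝ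
  left : x 0 = a
  right : x n = b
  strict : ∀ i < n, x i < x (i + 1)

/-- The mesh `|(I_k)|` of a partition: the maximal length of its subintervals. -/
def IntervalPartition.mesh {a b : ℝ} (P : IntervalPartition a b) : ℝ :=
  (Finset.range P.n).sup' (Finset.nonempty_range_iff.mpr P.npos.ne')
    fun k => P.x (k + 1) - P.x k

/-- `φ⁺_A(t) = sup_{x ∈ A} φ(x, t)`. -/
def phiSup {α : Type*} (φ : α → ℝ → ℝ≥0∞) (A : Set α) (t : ℝ) : ℝ≥0∞ :=
  ⨆ x ∈ A, φ x t

/-- `φ⁻_A(t) = inf_{x ∈ A} φ(x, t)`. -/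
def phiInf {α : Type*} (φ : α → ℝ → ℝ≥0∞) (A : Set α) (t : ℝ) : ℝ≥0∞ :=
  ⨅ x ∈ A, φ x t

/-- `Σ_k φ⁺_{I_k}(|Δ_k f| / |I_k|) · |I_k|` associated to a partition of `[a,b]`. -/
def vSum (φ : ℝ → ℝ → ℝ≥0∞) {a b : ℝ} (f : ℝ → ℝ) (P : IntervalPartition a b) : ℝ≥0∞ :=
  ∑ k ∈ Finset.range P.n,
    phiSup φ (Icc (P.x k) (P.x (k + 1)))
        (|f (P.x (k + 1)) - f (P.x k)| / (P.x (k + 1) - P.x k)) *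
      ENNReal.ofReal (P.x (k + 1) - P.x k)

/-- The same sum with `φ⁻` in place of `φ⁺`. -/
def vSumInf (φ : ℝ → ℝ → ℝ≥0∞) {a b : ℝ} (f : ℝ → ℝ) (P : IntervalPartition a b) : ℝ≥0∞ :=
  ∑ k ∈ Finset.range P.n,
    phiInf φ (Icc (P.x k) (P.x (k + 1)))
        (|f (P.x (k + 1)) - f (P.x k)| / (P.x (k + 1) - P.x k)) *
      ENNReal.ofReal (P.x (k + 1) - P.x k)

/-- The Riesz φ-variation `V^φ_I(f)`: supremum over all partitions. -/
def rieszVar (φ : ℝ → ℝ → ℝ≥0∞) (a b : ℝ) (f : ℝ → ℝ) : ℝ≥0∞ :=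
  ⨆ P : IntervalPartition a b, vSum φ f P

/-- The upper Riesz φ-variation `V̄^φ_I(f) = limsup_{|(I_k)|→0} Σ φ⁺_{I_k}(|Δ_k f|/|I_k|)|I_k|`. -/
def rieszVarUpper (φ : ℝ → ℝ → ℝ≥0∞) (a b : ℝ) (f : ℝ → ℝ) : ℝ≥0∞ :=
  ⨅ (δ : ℝ) (_ : 0 < δ), ⨆ (P : IntervalPartition a b) (_ : P.mesh < δ), vSum φ f P

/-- The lower Riesz φ-variation `V̲^φ_I(f) = limsup_{|(I_k)|→0} Σ φ⁻_{I_k}(|Δ_k f|/|I_k|)|I_k|`. -/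
def rieszVarLower (φ : ℝ → ℝ → ℝ≥0∞) (a b : ℝ) (f : ℝ → ℝ) : ℝ≥0∞ :=
  ⨅ (δ : ℝ) (_ : 0 < δ), ⨆ (P : IntervalPartition a b) (_ : P.mesh < δ), vSumInf φ f P

/-- Riesz φ-variation for `φ` independent of `x`. -/
def vSumC (φ : ℝ → ℝ≥0∞) {a b : ℝ} (f : ℝ → ℝ) (P : IntervalPartition a b) : ℝ≥0∞ :=
  ∑ k ∈ Finset.range P.n,
    φ (|f (P.x (k + 1)) - f (P.x k)| / (P.x (k + 1) - P.x k)) *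
      ENNReal.ofReal (P.x (k + 1) - P.x k)

def rieszVarC (φ : ℝ → ℝ≥0∞) (a b : ℝ) (f : ℝ → ℝ) : ℝ≥0∞ :=
  ⨆ P : IntervalPartition a b, vSumC φ f P

def rieszVarUpperC (φ : ℝ → ℝ≥0∞) (a b : ℝ) (f : ℝ → ℝ) : ℝ≥0∞ :=
  ⨅ (δ : ℝ) (_ : 0 < δ), ⨆ (P : IntervalPartition a b) (_ : P.mesh < δ), vSumC φ f P

/-- A weak Φ-function on `I` (`φ ∈ Φ_w(I)`). -/
structure IsPhiW {α : Type*} [MeasurableSpace α] (φ : α → ℝ → ℝ≥0∞) (I : Set α) : Prop where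
  meas : ∀ f : α → ℝ, Measurable f → Measurable fun x => φ x |f x|
  mono : ∀ x ∈ I, MonotoneOn (φ x) (Ici 0)
  map_zero : ∀ x ∈ I, φ x 0 = 0
  tendsto_zero : ∀ x ∈ I, Tendsto (φ x) (nhdsWithin 0 (Ioi 0)) (nhds 0)
  tendsto_top : ∀ x ∈ I, Tendsto (φ x) atTop (nhds ⊤)
  aInc1 : ∃ L : ℝ, 1 ≤ L ∧ ∀ x ∈ I, ∀ s t : ℝ, 0 < s → s ≤ t →
    φ x s / ENNReal.ofReal s ≤ ENNReal.ofReal L * (φ x t / ENNReal.ofReal t)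

/-- A convex Φ-function on `I` (`φ ∈ Φ_c(I)`): weak, convex and left-continuous in `t`. -/
structure IsPhiCx {α : Type*} [MeasurableSpace α] (φ : α → ℝ → ℝ≥0∞) (I : Set α) : Prop where
  toIsPhiW : IsPhiW φ I
  convex : ∀ x ∈ I, ∀ s t θ : ℝ, 0 ≤ s → 0 ≤ t → 0 ≤ θ → θ ≤ 1 →
    φ x (θ * s + (1 - θ) * t) ≤ ENNReal.ofReal θ * φ x s + ENNReal.ofReal (1 - θ) * φ x t
  leftCont : ∀ x ∈ I, ∀ t : ℝ, 0 < t → Tendsto (φ x) (nhdsWithin t (Iio t)) (nhds (φ x t))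

/-- An `x`-independent convex Φ-function (`φ ∈ Φ_c`). -/
structure IsPhiC (φ : ℝ → ℝ≥0∞) : Prop where
  mono : MonotoneOn φ (Ici 0)
  map_zero : φ 0 = 0
  tendsto_zero : Tendsto φ (nhdsWithin 0 (Ioi 0)) (nhds 0)
  tendsto_top : Tendsto φ atTop (nhds ⊤)
  convex : ∀ s t θ : ℝ, 0 ≤ s → 0 ≤ t → 0 ≤ θ → θ ≤ 1 →
    φ (θ * s + (1 - θ) * t) ≤ ENNReal.ofReal θ * φ s + ENNReal.ofReal (1 - θ) * φ t
  leftCont : ∀ t : ℝ, 0 < t → Tendsto φ (nhdsWithin t (Iio t)) (nhds (φ t))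

/-- `(aInc)_1` with a given constant `L`. -/
def AInc1Const (φ : ℝ → ℝ → ℝ≥0∞) (I : Set ℝ) (L : ℝ) : Prop :=
  1 ≤ L ∧ ∀ x ∈ I, ∀ s t : ℝ, 0 < s → s ≤ t →
    φ x s / ENNReal.ofReal s ≤ ENNReal.ofReal L * (φ x t / ENNReal.ofReal t)

/-- `(aInc)_p`: `t ↦ φ(x,t)/t^p` is almost increasing, uniformly in `x ∈ I`. -/
def AIncP (φ : ℝ → ℝ → ℝ≥0∞) (I : Set ℝ) (p : ℝ) : Prop :=
  ∃ Lp : ℝ, 1 ≤ Lp ∧ ∀ x ∈ I, ∀ s t : ℝ, 0 < s → s ≤ t →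
    φ x s / ENNReal.ofReal (s ^ p) ≤ ENNReal.ofReal Lp * (φ x t / ENNReal.ofReal (t ^ p))

/-- `(aDec)_q`: `t ↦ φ(x,t)/t^q` is almost decreasing, uniformly in `x ∈ I`. -/
def ADecQ (φ : ℝ → ℝ → ℝ≥0∞) (I : Set ℝ) (q : ℝ) : Prop :=
  ∃ Lq : ℝ, 1 ≤ Lq ∧ ∀ x ∈ I, ∀ s t : ℝ, 0 < s → s ≤ t →
    φ x t / ENNReal.ofReal (t ^ q) ≤ ENNReal.ofReal Lq * (φ x s / ENNReal.ofReal (s ^ q))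

/-- `(A0)`. -/
def A0 (φ : ℝ → ℝ → ℝ≥0∞) (I : Set ℝ) : Prop :=
  ∃ β : ℝ, 0 < β ∧ β ≤ 1 ∧ ∀ x ∈ I, φ x β ≤ 1 ∧ 1 ≤ φ x (1 / β)

/-- `(A1)`; in dimension one a ball of radius `r` has measure `2r`. -/
def A1 (φ : ℝ → ℝ → ℝ≥0∞) (I : Set ℝ) : Prop :=
  ∀ K : ℝ, 0 < K → ∃ β : ℝ, 0 < β ∧ β ≤ 1 ∧
    ∀ z r : ℝ, 0 < r → ∀ x ∈ Metric.ball z r ∩ I, ∀ y ∈ Metric.ball z r ∩ I,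
      ∀ t : ℝ, 0 ≤ t → φ y t ≤ ENNReal.ofReal (K / (2 * r)) →
        φ x (β * t) ≤ φ y t + 1

/-- A modulus of continuity: nonnegative with `ω(r) → 0` as `r → 0⁺`. -/
def IsModulus (ω : ℝ → ℝ) : Prop :=
  (∀ r, 0 ≤ ω r) ∧ Tendsto ω (nhdsWithin 0 (Ioi 0)) (nhds 0)

/-- `(VA1)`; in dimension one a ball of radius `r` has measure `2r`. -/
def VA1 (φ : ℝ → ℝ → ℝ≥0∞) (I : Set ℝ) : Prop :=
  ∀ K : ℝ, 0 < K → ∃ ω : ℝ → ℝ, IsModulus ω ∧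
    ∀ z r : ℝ, 0 < r → ∀ x ∈ Metric.ball z r ∩ I, ∀ y ∈ Metric.ball z r ∩ I,
      ∀ t : ℝ, 0 ≤ t → φ y t ≤ ENNReal.ofReal (K / (2 * r)) →
        φ x (t / (1 + ω r)) ≤ φ y t + ENNReal.ofReal (ω r)

/-- `φ'_∞(x) = lim_{t→∞} φ(x,t)/t`, realized as a supremum since the ratio is nondecreasing
for convex `φ` with `φ(x,0) = 0`. -/
def phiInfty {α : Type*} (φ : α → ℝ → ℝ≥0∞) (x : α) : ℝ≥0∞ :=
  ⨆ (t : ℝ) (_ : 0 < t), φ x t / ENNReal.ofReal t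

/-- Membership in `RBV^φ([a,b])`: `V^φ(λ f) → 0` as `λ → 0⁺`. -/
def MemRBV (φ : ℝ → ℝ → ℝ≥0∞) (a b : ℝ) (f : ℝ → ℝ) : Prop :=
  Tendsto (fun lam : ℝ => rieszVar φ a b fun x => lam * f x) (nhdsWithin 0 (Ioi 0)) (nhds 0)

/-- The Luxemburg quasi-seminorm `‖f‖_{RBV^φ([a,b])}`. -/
def rbvNorm (φ : ℝ → ℝ → ℝ≥0∞) (a b : ℝ) (f : ℝ → ℝ) : ℝ :=
  sInf {lam : ℝ | 0 < lam ∧ rieszVar φ a b (fun x => f x / lam) ≤ 1}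

/-- The Luxemburg quasi-seminorm associated to the upper Riesz variation. -/
def rbvNormUpper (φ : ℝ → ℝ → ℝ≥0∞) (a b : ℝ) (f : ℝ → ℝ) : ℝ :=
  sInf {lam : ℝ | 0 < lam ∧ rieszVarUpper φ a b (fun x => f x / lam) ≤ 1}

/-- Membership in the generalized Orlicz space `L^φ([a,b])`. -/
def MemLphi (φ : ℝ → ℝ → ℝ≥0∞) (a b : ℝ) (g : ℝ → ℝ) : Prop :=
  Measurable g ∧
    Tendsto (fun lam : ℝ => ∫⁻ x in Icc a b, φ x (lam * |g x|))
      (nhdsWithin 0 (Ioi 0)) (nhds 0)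

/-- The Luxemburg quasi-norm on `L^φ([a,b])`. -/
def lphiNorm (φ : ℝ → ℝ → ℝ≥0∞) (a b : ℝ) (g : ℝ → ℝ) : ℝ :=
  sInf {lam : ℝ | 0 < lam ∧ (∫⁻ x in Icc a b, φ x (|g x| / lam)) ≤ 1}

/-- Absolute continuity of `f` on `[a, b]`. -/
def AbsContOn (f : ℝ → ℝ) (a b : ℝ) : Prop :=
  ∀ ε : ℝ, 0 < ε → ∃ δ : ℝ, 0 < δ ∧ ∀ (m : ℕ) (s t : ℕ → ℝ),
    (∀ i < m, a ≤ s i ∧ s i ≤ t i ∧ t i ≤ b) →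
    (∀ i j, i < j → j < m → t i ≤ s j ∨ t j ≤ s i) →
    (∑ i ∈ Finset.range m, (t i - s i)) < δ →
    (∑ i ∈ Finset.range m, |f (t i) - f (s i)|) < ε

/-- Left-continuity of `f` at every point of `(a, b]`. -/
def LeftContOn (f : ℝ → ℝ) (a b : ℝ) : Prop :=
  ∀ x ∈ Ioc a b, Tendsto f (nhdsWithin x (Iio x)) (nhds (f x))

/-- `μ` is the distributional derivative measure of the left-continuous function `f` of
bounded variation on `[a,b]`: `f(x) = f(a) + Df([a, x))`. -/
def IsDerivMeasure (f : ℝ → ℝ) (a b : ℝ) (μ : SignedMeasure ℝ) : Prop :=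
  ∀ x ∈ Icc a b, f x = f a + μ (Ico a x)

end

section RieszAux

open ENNReal

variable {a b : ℝ}

theorem IntervalPartition.x_mono (P : IntervalPartition a b) :
    ∀ {i j : ℕ}, i ≤ j → j ≤ P.n → P.x i ≤ P.x j := by
  intro i j hij hj
  induction j with
  | zero => simp [Nat.le_zero.mp hij]
  | succ m ih =>
    rcases Nat.lt_or_ge i (m + 1) with h | h
    · exact le_trans (ih (Nat.lt_succ_iff.mp h) (le_trans (Nat.le_succ m) hj))
        (le_of_lt (P.strict m hj))
    · have : i = m + 1 := le_antisymm hij h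
      subst this; rfl

theorem IntervalPartition.x_mem (P : IntervalPartition a b) {i : ℕ} (hi : i ≤ P.n) :
    P.x i ∈ Icc a b := by
  constructor
  · have h := P.x_mono (Nat.zero_le i) hi; rwa [P.left] at h
  · have h := P.x_mono hi le_rfl; rwa [P.right] at h

theorem IntervalPartition.len_pos (P : IntervalPartition a b) {k : ℕ} (hk : k < P.n) :
    0 < P.x (k + 1) - P.x k :=
  sub_pos.mpr (P.strict k hk)

theorem IntervalPartition.len_le_mesh (P : IntervalPartition a b) {k : ℕ} (hk : k < P.n) :
    P.x (k + 1) - P.x k ≤ P.mesh := by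
  unfold IntervalPartition.mesh
  exact Finset.le_sup' (fun k => P.x (k + 1) - P.x k) (Finset.mem_range.mpr hk)

theorem IntervalPartition.sum_ofReal_len (P : IntervalPartition a b) :
    ∑ k ∈ Finset.range P.n, ENNReal.ofReal (P.x (k + 1) - P.x k) = ENNReal.ofReal (b - a) := by
  rw [← ENNReal.ofReal_sum_of_nonneg (fun k hk => (P.len_pos (Finset.mem_range.mp hk)).le),
    Finset.sum_range_sub, P.left, P.right]

theorem phiInf_le_phiSup {φ : ℝ → ℝ → ℝ≥0∞} {A : Set ℝ} (h : A.Nonempty) (t : ℝ) :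
    phiInf φ A t ≤ phiSup φ A t := by
  obtain ⟨x, hx⟩ := h
  simp only [phiInf, phiSup]
  exact le_trans (biInf_le (fun y => φ y t) hx) (le_biSup (fun y => φ y t) hx)

theorem rieszVarLower_le_upper (φ : ℝ → ℝ → ℝ≥0∞) (a b : ℝ) (f : ℝ → ℝ) :
    rieszVarLower φ a b f ≤ rieszVarUpper φ a b f := by
  refine iInf_mono fun δ => iInf_mono fun hδ => iSup_mono fun P => iSup_mono fun hP => ?_
  refine Finset.sum_le_sum fun k hk => ?_
  exact mul_le_mul_left
    (phiInf_le_phiSup (Set.nonempty_Icc.mpr (P.strict k (Finset.mem_range.mp hk)).le) _) _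

theorem rpow_ratio_le {C : ℝ} (q : ℝ) (h1 : 1 ≤ C) (h2 : C ≤ 2) : C ^ q ≤ max 1 (2 ^ q) := by
  rcases le_or_gt 0 q with hq | hq
  · exact le_max_of_le_right (Real.rpow_le_rpow (by linarith) h2 hq)
  · exact le_max_of_le_left (Real.rpow_le_one_of_one_le_of_nonpos h1 hq.le)

/-- From `(aDec)_q`, a doubling-type estimate: if `s ≤ t ≤ 2s` then
`φ x t ≤ Lq · max 1 (2^q) · φ x s`. -/
theorem adec_double {φ : ℝ → ℝ → ℝ≥0∞} {I : Set ℝ} {q Lq : ℝ} (hLq1 : 1 ≤ Lq)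
    (hLq : ∀ x ∈ I, ∀ s t : ℝ, 0 < s → s ≤ t →
      φ x t / ENNReal.ofReal (t ^ q) ≤ ENNReal.ofReal Lq * (φ x s / ENNReal.ofReal (s ^ q)))
    {x : ℝ} (hx : x ∈ I) {s t : ℝ} (hs : 0 < s) (hst : s ≤ t) (h2 : t ≤ 2 * s) :
    φ x t ≤ ENNReal.ofReal (Lq * max 1 (2 ^ q)) * φ x s := by
  have ht : 0 < t := lt_of_lt_of_le hs hst
  have hsq : 0 < s ^ q := Real.rpow_pos_of_pos hs q
  have htq : 0 < t ^ q := Real.rpow_pos_of_pos ht q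
  have h := hLq x hx s t hs hst
  rw [ENNReal.div_le_iff (by simp [ENNReal.ofReal_pos.mpr htq, ne_of_gt])
    ENNReal.ofReal_ne_top] at h
  refine h.trans ?_
  have hrw : ENNReal.ofReal Lq * (φ x s / ENNReal.ofReal (s ^ q)) * ENNReal.ofReal (t ^ q)
      = ENNReal.ofReal Lq * (φ x s * (ENNReal.ofReal (t ^ q) / ENNReal.ofReal (s ^ q))) := by
    rw [div_eq_mul_inv, div_eq_mul_inv]
    ring
  rw [hrw, ← ENNReal.ofReal_div_of_pos hsq, ← Real.div_rpow ht.le hs.le]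
  have hratio : (t / s) ^ q ≤ max 1 (2 ^ q) :=
    rpow_ratio_le q ((one_le_div hs).mpr hst) (by rw [div_le_iff₀ hs]; linarith)
  calc ENNReal.ofReal Lq * (φ x s * ENNReal.ofReal ((t / s) ^ q))
      ≤ ENNReal.ofReal Lq * (φ x s * ENNReal.ofReal (max 1 (2 ^ q))) :=
        mul_le_mul_right (mul_le_mul_right (ENNReal.ofReal_le_ofReal hratio) _) _
    _ = ENNReal.ofReal (Lq * max 1 (2 ^ q)) * φ x s := by
        rw [ENNReal.ofReal_mul (by linarith)]; ring

/-- Absorption: if `A ≤ η A + B` with `η ≤ 1/2` and `A, B` finite, then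
`A ≤ (1 + 2η) B`. -/
theorem ennreal_absorb {A B : ℝ≥0∞} {η : ℝ} (h0 : 0 ≤ η) (h2 : η ≤ 1 / 2) (hA : A ≠ ⊤)
    (hB : B ≠ ⊤) (h : A ≤ ENNReal.ofReal η * A + B) : A ≤ ENNReal.ofReal (1 + 2 * η) * B := by
  have hmt : ENNReal.ofReal η * A ≠ ⊤ := ENNReal.mul_ne_top ENNReal.ofReal_ne_top hA
  have hr : A.toReal ≤ η * A.toReal + B.toReal := by
    calc A.toReal ≤ (ENNReal.ofReal η * A + B).toReal :=
          ENNReal.toReal_mono (by exact ENNReal.add_ne_top.mpr ⟨hmt, hB⟩) h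
      _ = η * A.toReal + B.toReal := by
          rw [ENNReal.toReal_add hmt hB, ENNReal.toReal_mul, ENNReal.toReal_ofReal h0]
  have hAr : A.toReal ≤ (1 + 2 * η) * B.toReal := by
    nlinarith [ENNReal.toReal_nonneg (a := A), ENNReal.toReal_nonneg (a := B),
      mul_nonneg h0 (sub_nonneg.mpr hr),
      mul_nonneg (mul_nonneg h0 (by linarith : (0:ℝ) ≤ 1 - 2 * η))
        (ENNReal.toReal_nonneg (a := A))]
  calc A = ENNReal.ofReal A.toReal := (ENNReal.ofReal_toReal hA).symm
    _ ≤ ENNReal.ofReal ((1 + 2 * η) * B.toReal) := ENNReal.ofReal_le_ofReal hAr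
    _ = ENNReal.ofReal (1 + 2 * η) * B := by
        rw [ENNReal.ofReal_mul (by linarith), ENNReal.ofReal_toReal hB]

set_option maxHeartbeats 1000000 in
/-- The key per-interval estimate: on a short interval `[u,v] ⊆ [a,b]`,
`φ⁺_{[u,v]}(t) ≤ (1+ε)(φ⁻_{[u,v]}(t) + 2ε)`. -/
theorem key_interval {φ : ℝ → ℝ → ℝ≥0∞} {a b : ℝ} (hφ : IsPhiCx φ (Icc a b))
    {q Lq : ℝ} (hLq1 : 1 ≤ Lq)
    (hLq : ∀ x ∈ Icc a b, ∀ s t : ℝ, 0 < s → s ≤ t →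
      φ x t / ENNReal.ofReal (t ^ q) ≤ ENNReal.ofReal Lq * (φ x s / ENNReal.ofReal (s ^ q)))
    {ω : ℝ → ℝ} (hω0 : ∀ r, 0 ≤ ω r) {Yr : ℝ} (hYr : 0 ≤ Yr)
    (hkey : ∀ z r : ℝ, 0 < r → ∀ x ∈ Metric.ball z r ∩ Icc a b,
      ∀ y ∈ Metric.ball z r ∩ Icc a b, ∀ t : ℝ, 0 ≤ t →
      φ y t ≤ ENNReal.ofReal (2 * (Yr + 1 + (b - a)) / (2 * r)) →
      φ x (t / (1 + ω r)) ≤ φ y t + ENNReal.ofReal (ω r))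
    {ε : ℝ} (hε0 : 0 < ε) (hε1 : ε ≤ 1)
    {u v t : ℝ} (hu : a ≤ u) (huv : u < v) (hv : v ≤ b) (ht : 0 < t)
    (hωuv : ω (v - u) + min (v - u) 1 ≤ (ε / (2 * (Lq * max 1 (2 ^ q)))) ^ 2)
    (hinf : phiInf φ (Set.Icc u v) t ≤ ENNReal.ofReal ((Yr + 1) / (v - u))) :
    phiSup φ (Set.Icc u v) t ≤
      ENNReal.ofReal (1 + ε) * (phiInf φ (Set.Icc u v) t + ENNReal.ofReal (2 * ε)) := by
  have hab : a < b := lt_of_le_of_lt hu (lt_of_lt_of_le huv hv)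
  set LC : ℝ := Lq * max 1 (2 ^ q) with hLC
  have hCq1 : (1 : ℝ) ≤ max 1 (2 ^ q) := le_max_left _ _
  have hLC1 : 1 ≤ LC := one_le_mul_of_one_le_of_one_le hLq1 hCq1
  have hlen : 0 < v - u := sub_pos.mpr huv
  have hlenba : v - u ≤ b - a := by linarith
  set ω' : ℝ := ω (v - u) + min (v - u) 1 with hω'
  have hω'0 : 0 < ω' := add_pos_of_nonneg_of_pos (hω0 _) (lt_min hlen one_pos)
  have hεδε : (ε / (2 * LC)) ^ 2 ≤ ε := by
    have h1 : ε / (2 * LC) ≤ ε / 2 := by gcongr <;> linarith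
    have h2 : (ε / (2 * LC)) ^ 2 ≤ (ε / 2) ^ 2 :=
      pow_le_pow_left₀ (by positivity) h1 2
    nlinarith
  have hω'ε : ω' ≤ ε := hωuv.trans hεδε
  have hω'1 : ω' ≤ 1 := hω'ε.trans hε1
  set c : ℝ := Real.sqrt ω' with hcdef
  have hc0 : 0 < c := Real.sqrt_pos.mpr hω'0
  have hc2 : c ^ 2 = ω' := Real.sq_sqrt hω'0.le
  have hc1 : c ≤ 1 := by nlinarith [hc2, hω'1, hc0]
  have hcLC : c * LC ≤ ε / 2 := by
    have h1 : c ≤ ε / (2 * LC) := by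
      rw [hcdef]
      exact (Real.sqrt_le_sqrt hωuv).trans_eq (Real.sqrt_sq (by positivity))
    calc c * LC ≤ ε / (2 * LC) * LC := by
          exact mul_le_mul_of_nonneg_right h1 (by linarith)
      _ = ε / 2 := by field_simp
  have hIcc : Set.Icc u v ⊆ Set.Icc a b := Set.Icc_subset_Icc hu hv
  have hball : ∀ p ∈ Set.Icc u v, p ∈ Metric.ball ((u + v) / 2) (v - u) := by
    intro p hp
    rw [Metric.mem_ball, Real.dist_eq, abs_lt]
    exact ⟨by linarith [hp.1, hp.2], by linarith [hp.1, hp.2]⟩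
  have hinf_ne : phiInf φ (Set.Icc u v) t ≠ ⊤ :=
    (lt_of_le_of_lt hinf ENNReal.ofReal_lt_top).ne
  -- choose y nearly attaining the infimum
  obtain ⟨y, hy, hylt⟩ : ∃ y ∈ Set.Icc u v,
      φ y t < phiInf φ (Set.Icc u v) t + ENNReal.ofReal ε := by
    have h1 : phiInf φ (Set.Icc u v) t <
        phiInf φ (Set.Icc u v) t + ENNReal.ofReal ε :=
      ENNReal.lt_add_right hinf_ne (ENNReal.ofReal_pos.mpr hε0).ne'
    rw [phiInf, iInf_lt_iff] at h1
    obtain ⟨y, hy1⟩ := h1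
    rw [iInf_lt_iff] at hy1
    obtain ⟨hyA, hfy⟩ := hy1
    exact ⟨y, hyA, hfy⟩
  -- threshold condition for (VA1)
  have hthr : φ y t ≤ ENNReal.ofReal (2 * (Yr + 1 + (b - a)) / (2 * (v - u))) := by
    have h1 : φ y t ≤ ENNReal.ofReal ((Yr + 1) / (v - u)) + ENNReal.ofReal ε :=
      hylt.le.trans (add_le_add_left hinf _)
    rw [← ENNReal.ofReal_add (by positivity) hε0.le] at h1
    refine h1.trans (ENNReal.ofReal_le_ofReal ?_)
    have hεle : ε ≤ (b - a) / (v - u) := by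
      rw [le_div_iff₀ hlen]; nlinarith
    have : (Yr + 1) / (v - u) + (b - a) / (v - u) = 2 * (Yr + 1 + (b - a)) / (2 * (v - u)) := by
      field_simp
    linarith [add_le_add_left hεle ((Yr + 1) / (v - u))]
  set s₀ : ℝ := t / (1 + ω') with hs₀def
  have hs₀pos : 0 < s₀ := div_pos ht (by linarith)
  have hs₀t : s₀ ≤ t := by
    rw [hs₀def]; exact div_le_self ht.le (by linarith)
  set B : ℝ≥0∞ := phiInf φ (Set.Icc u v) t + ENNReal.ofReal ε + ENNReal.ofReal ω' with hBdef
  have hBne : B ≠ ⊤ := by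
    rw [hBdef]
    exact ENNReal.add_ne_top.mpr
      ⟨ENNReal.add_ne_top.mpr ⟨hinf_ne, ENNReal.ofReal_ne_top⟩, ENNReal.ofReal_ne_top⟩
  -- (VA1) estimate on φ x s₀
  have hB : ∀ x ∈ Set.Icc u v, φ x s₀ ≤ B := by
    intro x hx
    have hva := hkey ((u + v) / 2) (v - u) hlen x ⟨hball x hx, hIcc hx⟩ y
      ⟨hball y hy, hIcc hy⟩ t ht.le hthr
    have hmono : φ x s₀ ≤ φ x (t / (1 + ω (v - u))) := by
      refine hφ.toIsPhiW.mono x (hIcc hx) (Set.mem_Ici.mpr hs₀pos.le)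
        (Set.mem_Ici.mpr (div_nonneg ht.le (by linarith [hω0 (v - u)]))) ?_
      rw [hs₀def, div_le_div_iff₀ (by linarith) (by linarith [hω0 (v - u)])]
      have h2 := lt_min hlen one_pos
      have h3 : ω (v - u) ≤ ω' := by rw [hω']; linarith
      nlinarith [mul_le_mul_of_nonneg_left h3 ht.le]
    calc φ x s₀ ≤ φ y t + ENNReal.ofReal (ω (v - u)) := hmono.trans hva
      _ ≤ (phiInf φ (Set.Icc u v) t + ENNReal.ofReal ε) + ENNReal.ofReal ω' := by
          refine add_le_add hylt.le (ENNReal.ofReal_le_ofReal ?_)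
          rw [hω']; have := lt_min hlen one_pos; linarith
      _ = B := rfl
  -- main per-point estimate
  have hmain : ∀ x ∈ Set.Icc u v, φ x t ≤ ENNReal.ofReal (1 + 2 * (c * LC)) * B := by
    intro x hx
    have hxab : x ∈ Set.Icc a b := hIcc hx
    have hfin : φ x t ≤ ENNReal.ofReal LC * φ x s₀ := by
      refine adec_double hLq1 hLq hxab hs₀pos hs₀t ?_
      have h2s : 2 * s₀ = 2 * t / (1 + ω') := by rw [hs₀def]; ring
      rw [h2s, le_div_iff₀ (by linarith)]; nlinarith
    have hxt_ne : φ x t ≠ ⊤ := by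
      refine (lt_of_le_of_lt (hfin.trans (mul_le_mul_right (hB x hx) _)) ?_).ne
      exact ENNReal.mul_lt_top ENNReal.ofReal_lt_top (lt_top_iff_ne_top.mpr hBne)
    set T : ℝ := (1 + c) * t with hTdef
    have hT : φ x T ≤ ENNReal.ofReal LC * φ x t := by
      refine adec_double hLq1 hLq hxab ht ?_ ?_
      · rw [hTdef]; exact le_mul_of_one_le_left ht.le (by linarith)
      · rw [hTdef]; exact mul_le_mul_of_nonneg_right (by linarith) ht.le
    set θ : ℝ := ω' / (ω' + c + c * ω') with hθdef
    have hd0 : 0 < ω' + c + c * ω' := by positivity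
    have hθ0 : 0 ≤ θ := by positivity
    have hθ1 : θ ≤ 1 := by
      rw [hθdef, div_le_one hd0]; nlinarith [hc0.le, hω'0.le, mul_nonneg hc0.le hω'0.le]
    have hθc : θ ≤ c := by
      rw [hθdef, div_le_iff₀ hd0]
      nlinarith [hc2, mul_nonneg hc0.le hω'0.le, mul_nonneg (mul_nonneg hc0.le hc0.le) hω'0.le]
    have hcomb : θ * T + (1 - θ) * s₀ = t := by
      rw [hθdef, hTdef, hs₀def]; field_simp; ring
    have hconv := hφ.convex x hxab T s₀ θ (by positivity) hs₀pos.le hθ0 hθ1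
    rw [hcomb] at hconv
    have hchain : φ x t ≤ ENNReal.ofReal (c * LC) * φ x t + B := by
      calc φ x t ≤ ENNReal.ofReal θ * φ x T + ENNReal.ofReal (1 - θ) * φ x s₀ := hconv
        _ ≤ ENNReal.ofReal θ * (ENNReal.ofReal LC * φ x t) + 1 * φ x s₀ := by
            refine add_le_add (mul_le_mul_right hT _) (mul_le_mul_left ?_ _)
            exact ENNReal.ofReal_le_one.mpr (by linarith)
        _ ≤ ENNReal.ofReal (c * LC) * φ x t + B := by
            rw [one_mul, ← mul_assoc, ← ENNReal.ofReal_mul hθ0]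
            exact add_le_add (mul_le_mul_left
              (ENNReal.ofReal_le_ofReal (mul_le_mul_of_nonneg_right hθc (by linarith))) _)
              (hB x hx)
    exact ennreal_absorb (by positivity) (by linarith) hxt_ne hBne hchain
  -- conclude
  refine iSup₂_le fun x hx => (hmain x hx).trans ?_
  have h1 : ENNReal.ofReal (1 + 2 * (c * LC)) ≤ ENNReal.ofReal (1 + ε) :=
    ENNReal.ofReal_le_ofReal (by linarith)
  have h2 : B ≤ phiInf φ (Set.Icc u v) t + ENNReal.ofReal (2 * ε) := by
    rw [hBdef, add_assoc, ← ENNReal.ofReal_add hε0.le hω'0.le]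
    exact add_le_add_right (ENNReal.ofReal_le_ofReal (by linarith)) _
  exact mul_le_mul' h1 h2

end RieszAux

/-- Lemma 5.3.  If `φ ∈ Φ_c(I)` satisfies (VA1) and (aDec)_q, then the upper and lower
Riesz variations coincide: `V̄^φ_I(f) = V̲^φ_I(f)`. -/
theorem riesz_variation_upper_eq_lower (a b : ℝ) (hab : a < b)
    (φ : ℝ → ℝ → ℝ≥0∞) (hφ : IsPhiCx φ (Set.Icc a b)) (hva1 : VA1 φ (Set.Icc a b))
    (q : ℝ) (hq : ADecQ φ (Set.Icc a b) q) :
    ∀ f : ℝ → ℝ, rieszVarUpper φ a b f = rieszVarLower φ a b f := by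
  intro f
  refine le_antisymm ?_ (rieszVarLower_le_upper φ a b f)
  set Y := rieszVarLower φ a b f with hYdef
  rcases eq_top_or_lt_top Y with hYtop | hYlt
  · rw [hYtop]; exact le_top
  refine ENNReal.le_of_forall_pos_le_add fun μ hμ _ => ?_
  obtain ⟨Lq, hLq1, hLq⟩ := hq
  set Cq : ℝ := max 1 (2 ^ q) with hCqdef
  have hCq1 : (1 : ℝ) ≤ Cq := le_max_left _ _
  have hLC1 : (1 : ℝ) ≤ Lq * Cq := one_le_mul_of_one_le_of_one_le hLq1 hCq1
  set Yr : ℝ := Y.toReal with hYrdef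
  have hYr0 : 0 ≤ Yr := ENNReal.toReal_nonneg
  have hYY : Y = ENNReal.ofReal Yr := (ENNReal.ofReal_toReal hYlt.ne).symm
  set D : ℝ := Yr + 2 + 4 * (b - a) with hDdef
  have hD0 : 0 < D := by nlinarith
  set ε : ℝ := min 1 ((μ : ℝ) / D) with hεdef
  have hμ0 : (0 : ℝ) < μ := hμ
  have hε0 : 0 < ε := lt_min one_pos (div_pos hμ0 hD0)
  have hε1 : ε ≤ 1 := min_le_left _ _
  have hεD : ε * D ≤ μ := by
    have h1 := min_le_right 1 ((μ : ℝ) / D)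
    calc ε * D ≤ (μ : ℝ) / D * D := mul_le_mul_of_nonneg_right h1 hD0.le
      _ = μ := by field_simp
  have hK'0 : (0 : ℝ) < 2 * (Yr + 1 + (b - a)) := by nlinarith
  obtain ⟨ω, ⟨hω0, hωt⟩, hkey⟩ := hva1 _ hK'0
  set ω₁ : ℝ → ℝ := fun r => ω r + min r 1 with hω₁def
  have hω₁t : Tendsto ω₁ (nhdsWithin 0 (Ioi 0)) (nhds 0) := by
    have hc : Continuous fun r : ℝ => min r 1 := by fun_prop
    have h1 := (hc.tendsto 0).mono_left (nhdsWithin_le_nhds (s := Ioi 0))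
    have h2 := hωt.add h1
    simpa using h2
  set εδ : ℝ := (ε / (2 * (Lq * Cq))) ^ 2 with hεδdef
  have hεδ0 : 0 < εδ := by rw [hεδdef]; positivity
  obtain ⟨δ1, hδ10, hδ1⟩ : ∃ δ1 > 0, ∀ r, 0 < r → r < δ1 → ω₁ r ≤ εδ := by
    rw [Metric.tendsto_nhdsWithin_nhds] at hω₁t
    obtain ⟨δ1, hδ1, h⟩ := hω₁t εδ hεδ0
    refine ⟨δ1, hδ1, fun r hr hrδ => ?_⟩
    have h3 := h (x := r) hr (by simpa [Real.dist_eq, abs_of_pos hr] using hrδ)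
    rw [Real.dist_eq, sub_zero] at h3
    exact (le_abs_self _).trans h3.le
  obtain ⟨δ2, hδ20, hδ2⟩ : ∃ δ2 > 0,
      (⨆ (P : IntervalPartition a b) (_ : P.mesh < δ2), vSumInf φ f P) ≤
        Y + ENNReal.ofReal ε := by
    have h1 : Y < Y + ENNReal.ofReal ε :=
      ENNReal.lt_add_right hYlt.ne (ENNReal.ofReal_pos.mpr hε0).ne'
    have h2 : rieszVarLower φ a b f < Y + ENNReal.ofReal ε := hYdef ▸ h1
    rw [rieszVarLower, iInf_lt_iff] at h2
    obtain ⟨δ2, h2⟩ := h2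
    rw [iInf_lt_iff] at h2
    obtain ⟨hδ20, h2⟩ := h2
    exact ⟨δ2, hδ20, h2.le⟩
  set δ : ℝ := min δ1 δ2 with hδdef
  have hδ0 : 0 < δ := lt_min hδ10 hδ20
  have hsupInf : (⨆ (P : IntervalPartition a b) (_ : P.mesh < δ), vSumInf φ f P) ≤
      Y + ENNReal.ofReal ε := by
    refine le_trans ?_ hδ2
    exact iSup_mono fun P => iSup_le fun hP =>
      le_iSup (fun _ : P.mesh < δ2 => vSumInf φ f P)
        (lt_of_lt_of_le hP (min_le_right _ _))
  -- the per-partition bound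
  have hmain : ∀ P : IntervalPartition a b, P.mesh < δ →
      vSum φ f P ≤ ENNReal.ofReal (1 + ε) *
        (vSumInf φ f P + ENNReal.ofReal (2 * ε * (b - a))) := by
    intro P hP
    have hterm : ∀ k ∈ Finset.range P.n,
        phiSup φ (Icc (P.x k) (P.x (k + 1)))
            (|f (P.x (k + 1)) - f (P.x k)| / (P.x (k + 1) - P.x k)) *
          ENNReal.ofReal (P.x (k + 1) - P.x k) ≤
        ENNReal.ofReal (1 + ε) *
          (phiInf φ (Icc (P.x k) (P.x (k + 1)))
              (|f (P.x (k + 1)) - f (P.x k)| / (P.x (k + 1) - P.x k)) *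
            ENNReal.ofReal (P.x (k + 1) - P.x k) +
          ENNReal.ofReal (2 * ε) * ENNReal.ofReal (P.x (k + 1) - P.x k)) := by
      intro k hk
      have hkn := Finset.mem_range.mp hk
      set u := P.x k with hudef
      set v := P.x (k + 1) with hvdef
      have huv : u < v := P.strict k hkn
      have hu : a ≤ u := (P.x_mem hkn.le).1
      have hv : v ≤ b := (P.x_mem hkn).2
      have hlen : 0 < v - u := sub_pos.mpr huv
      set t := |f v - f u| / (v - u) with htdef
      rcases eq_or_lt_of_le (show (0 : ℝ) ≤ t from div_nonneg (abs_nonneg _) hlen.le) with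
        h0 | ht
      · have hsup0 : phiSup φ (Icc u v) t = 0 := by
          refine le_antisymm (iSup₂_le fun x hx => ?_) zero_le
          rw [← h0]
          exact le_of_eq (hφ.toIsPhiW.map_zero x (Set.Icc_subset_Icc hu hv hx))
        rw [hsup0, zero_mul]
        exact zero_le
      · have hinfb : phiInf φ (Icc u v) t * ENNReal.ofReal (v - u) ≤
            ENNReal.ofReal (Yr + 1) := by
          calc phiInf φ (Icc u v) t * ENNReal.ofReal (v - u) ≤ vSumInf φ f P :=
                Finset.single_le_sum (f := fun k => phiInf φ (Icc (P.x k) (P.x (k + 1)))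
                    (|f (P.x (k + 1)) - f (P.x k)| / (P.x (k + 1) - P.x k)) *
                  ENNReal.ofReal (P.x (k + 1) - P.x k)) (fun i _ => zero_le) hk
            _ ≤ Y + ENNReal.ofReal ε := le_trans
                (le_iSup₂ (f := fun (P : IntervalPartition a b) (_ : P.mesh < δ) =>
                  vSumInf φ f P) P hP) hsupInf
            _ ≤ ENNReal.ofReal (Yr + 1) := by
                rw [hYY, ← ENNReal.ofReal_add hYr0 hε0.le]
                exact ENNReal.ofReal_le_ofReal (by linarith)
        have hinf : phiInf φ (Icc u v) t ≤ ENNReal.ofReal ((Yr + 1) / (v - u)) := by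
          rw [ENNReal.ofReal_div_of_pos hlen]
          exact (ENNReal.le_div_iff_mul_le (Or.inl (ENNReal.ofReal_pos.mpr hlen).ne')
            (Or.inl ENNReal.ofReal_ne_top)).mpr hinfb
        have hωb : ω (v - u) + min (v - u) 1 ≤ (ε / (2 * (Lq * max 1 (2 ^ q)))) ^ 2 :=
          hδ1 (v - u) hlen
            (lt_of_le_of_lt (P.len_le_mesh hkn) (lt_of_lt_of_le hP (min_le_left _ _)))
        have hkeyint := key_interval hφ hLq1 hLq hω0 hYr0 hkey hε0 hε1 hu huv hv ht hωb hinf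
        calc phiSup φ (Icc u v) t * ENNReal.ofReal (v - u)
            ≤ ENNReal.ofReal (1 + ε) * (phiInf φ (Icc u v) t + ENNReal.ofReal (2 * ε)) *
              ENNReal.ofReal (v - u) := mul_le_mul_left hkeyint _
          _ = ENNReal.ofReal (1 + ε) * (phiInf φ (Icc u v) t * ENNReal.ofReal (v - u) +
              ENNReal.ofReal (2 * ε) * ENNReal.ofReal (v - u)) := by ring
    unfold vSum
    refine le_trans (Finset.sum_le_sum hterm) (le_of_eq ?_)
    rw [← Finset.mul_sum, Finset.sum_add_distrib, ← Finset.mul_sum,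
      IntervalPartition.sum_ofReal_len, ← ENNReal.ofReal_mul (by positivity : (0:ℝ) ≤ 2 * ε)]
    rfl
  -- conclude
  have hba : (0 : ℝ) ≤ b - a := by linarith
  calc rieszVarUpper φ a b f
      ≤ ⨆ (P : IntervalPartition a b) (_ : P.mesh < δ), vSum φ f P := by
        unfold rieszVarUpper
        exact iInf₂_le δ hδ0
    _ ≤ ⨆ (P : IntervalPartition a b) (_ : P.mesh < δ), ENNReal.ofReal (1 + ε) *
          (vSumInf φ f P + ENNReal.ofReal (2 * ε * (b - a))) :=
        iSup_mono fun P => iSup_mono fun hP => hmain P hP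
    _ ≤ ENNReal.ofReal (1 + ε) *
          ((Y + ENNReal.ofReal ε) + ENNReal.ofReal (2 * ε * (b - a))) := by
        refine iSup₂_le fun P hP => ?_
        refine mul_le_mul_right (add_le_add_left ?_ _) _
        exact le_trans (le_iSup₂ (f := fun (P : IntervalPartition a b)
          (_ : P.mesh < δ) => vSumInf φ f P) P hP) hsupInf
    _ ≤ Y + μ := by
        rw [hYY, ← ENNReal.ofReal_add hYr0 hε0.le,
          ← ENNReal.ofReal_add (by positivity) (by positivity),
          ← ENNReal.ofReal_mul (by positivity : (0:ℝ) ≤ 1 + ε)]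
        calc ENNReal.ofReal ((1 + ε) * (Yr + ε + 2 * ε * (b - a)))
            ≤ ENNReal.ofReal (Yr + ε * D) := by
              refine ENNReal.ofReal_le_ofReal ?_
              nlinarith [mul_nonneg hε0.le (sub_nonneg.mpr hε1),
                mul_nonneg (mul_nonneg hε0.le (sub_nonneg.mpr hε1)) hba]
          _ = ENNReal.ofReal Yr + ENNReal.ofReal (ε * D) :=
              ENNReal.ofReal_add hYr0 (by positivity)
          _ ≤ ENNReal.ofReal Yr + μ := by
              refine add_le_add_right ?_ _
              calc ENNReal.ofReal (ε * D) ≤ ENNReal.ofReal μ :=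
                    ENNReal.ofReal_le_ofReal hεD
                _ = (μ : ℝ≥0∞) := ENNReal.ofReal_coe_nnreal
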